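/- arXiv:2503.19483 — 2 statements merged into one kernel-verified Lean document; each statement's English description precedes it below -/
import Mathlib

section
/- Let E be a real vector space and let P, Q be linear endomorphisms of E with P∘P = P, Q∘Q = Q, P∘Q = Q∘P = 0, and P + Q = id. Let d, B, Δλ, κ, μ be real numbers with 1 + (1−d)·(1−B)·2μ·Δλ ≠ 0, and let x ∈ E. Then σ := (1−d)·(3κ·P + (2μ / (1 + (1−d)(1−B)·2μ·Δλ))·Q)(x) is the unique element of E satisfying the implicit relation σ = (1−d)·(3κ·P + 2μ·Q)(x − (1−B)·Δλ·Q(σ)). -/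
/-!
Write `C b := a • P + b • Q`. Since `Q` is idempotent and annihilates `P` on both sides,
`Q ∘ C b = C b ∘ Q = b • Q`. Applying `Q` to the relation `σ = c • C b (x - t • Q σ)` therefore
decouples it into the scalar equation `(1 + c b t) • Q σ = c b • Q x`, which fixes `Q σ`, and
then the relation itself fixes `σ`. The same two identities verify that the explicit formula,
with the deviatoric modulus `b` replaced by `b / (1 + c b t)`, solves the relation.
-/

namespace Module.End

variable {K E : Type*} [Field K] [AddCommGroup E] [Module K E] {P Q : Module.End K E}

theorem mul_smul_add_smul_of_idempotent (hQ : Q * Q = Q) (hQP : Q * P = 0) (a b : K) :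
    Q * (a • P + b • Q) = b • Q := by
  rw [mul_add, mul_smul_comm, mul_smul_comm, hQP, hQ, smul_zero, zero_add]

theorem smul_add_smul_mul_of_idempotent (hQ : Q * Q = Q) (hPQ : P * Q = 0) (a b : K) :
    (a • P + b • Q) * Q = b • Q := by
  rw [add_mul, smul_mul_assoc, smul_mul_assoc, hPQ, hQ, smul_zero, zero_add]

theorem apply_smul_add_smul_apply_of_idempotent (hQ : Q * Q = Q) (hQP : Q * P = 0)
    (a b : K) (x : E) : Q ((a • P + b • Q) x) = b • Q x := by
  rw [← mul_apply, mul_smul_add_smul_of_idempotent hQ hQP, LinearMap.smul_apply]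

theorem smul_add_smul_apply_apply_of_idempotent (hQ : Q * Q = Q) (hPQ : P * Q = 0)
    (a b : K) (x : E) : (a • P + b • Q) (Q x) = b • Q x := by
  rw [← mul_apply, smul_add_smul_mul_of_idempotent hQ hPQ, LinearMap.smul_apply]

theorem one_add_mul_smul_apply_eq_of_eq_smul_apply_sub (hQ : Q * Q = Q) (hQP : Q * P = 0)
    {a b c t : K} {x s : E} (hs : s = c • (a • P + b • Q) (x - t • Q s)) :
    (1 + c * b * t) • Q s = (c * b) • Q x := by
  have hQs : Q s = (c * b) • (Q x - t • Q s) := by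
    conv_lhs => rw [hs]
    rw [map_smul, apply_smul_add_smul_apply_of_idempotent hQ hQP, map_sub, map_smul,
      ← mul_apply Q Q s, hQ, smul_smul]
  rw [add_smul, one_smul]
  nth_rewrite 1 [hQs]
  module

theorem eq_smul_add_div_smul_apply_of_eq_smul_apply_sub (hQ : Q * Q = Q) (hQP : Q * P = 0)
    (hPQ : P * Q = 0) {a b c t : K} (hden : 1 + c * b * t ≠ 0) {x s : E}
    (hs : s = c • (a • P + b • Q) (x - t • Q s)) :
    s = c • (a • P + (b / (1 + c * b * t)) • Q) x := by
  have hQs : Q s = (c * b / (1 + c * b * t)) • Q x := by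
    rw [div_eq_inv_mul, ← smul_smul, ← one_add_mul_smul_apply_eq_of_eq_smul_apply_sub hQ hQP hs,
      smul_smul, inv_mul_cancel₀ hden, one_smul]
  calc s = c • (a • P + b • Q) (x - t • Q s) := hs
    _ = c • ((a • P + b • Q) x - (t * (c * b / (1 + c * b * t)) * b) • Q x) := by
      rw [hQs, smul_smul, map_sub, map_smul, smul_add_smul_apply_apply_of_idempotent hQ hPQ,
        smul_smul]
    _ = c • (a • P + (b / (1 + c * b * t)) • Q) x := by
      simp only [LinearMap.add_apply, LinearMap.smul_apply]
      match_scalars <;> field_simp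
      ring

theorem smul_add_div_smul_apply_eq_smul_apply_sub (hQ : Q * Q = Q) (hQP : Q * P = 0)
    (hPQ : P * Q = 0) {a b c t : K} (hden : 1 + c * b * t ≠ 0) (x : E) :
    c • (a • P + (b / (1 + c * b * t)) • Q) x =
      c • (a • P + b • Q) (x - t • Q (c • (a • P + (b / (1 + c * b * t)) • Q) x)) := by
  rw [map_smul, apply_smul_add_smul_apply_of_idempotent hQ hQP, smul_smul, smul_smul, map_sub,
    map_smul, smul_add_smul_apply_apply_of_idempotent hQ hPQ, smul_smul]
  simp only [LinearMap.add_apply, LinearMap.smul_apply]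
  match_scalars <;> field_simp
  ring

end Module.End

open Module.End in
theorem implex_stress_explicit_unique_general
    (E : Type*) [AddCommGroup E] [Module ℝ E]
    (P Q : Module.End ℝ E)
    (hQ : Q * Q = Q)
    (hPQ : P * Q = 0) (hQP : Q * P = 0)
    (d B Δlam κ μ : ℝ)
    (hden : 1 + (1 - d) * (1 - B) * 2 * μ * Δlam ≠ 0)
    (x : E) :
    ((1 - d) • (((3 * κ) • P +
        (2 * μ / (1 + (1 - d) * (1 - B) * 2 * μ * Δlam)) • Q) x) =
      (1 - d) • (((3 * κ) • P + (2 * μ) • Q)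
        (x - ((1 - B) * Δlam) • Q ((1 - d) • (((3 * κ) • P +
          (2 * μ / (1 + (1 - d) * (1 - B) * 2 * μ * Δlam)) • Q) x))))) ∧
    (∀ s : E,
      s = (1 - d) • (((3 * κ) • P + (2 * μ) • Q) (x - ((1 - B) * Δlam) • Q s)) →
      s = (1 - d) • (((3 * κ) • P +
        (2 * μ / (1 + (1 - d) * (1 - B) * 2 * μ * Δlam)) • Q) x)) := by
  have hcbt : (1 - d) * (1 - B) * 2 * μ * Δlam = (1 - d) * (2 * μ) * ((1 - B) * Δlam) := by ring
  rw [hcbt] at hden ⊢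
  exact ⟨smul_add_div_smul_apply_eq_smul_apply_sub hQ hQP hPQ hden x,
    fun _ => eq_smul_add_div_smul_apply_of_eq_smul_apply_sub hQ hQP hPQ hden⟩

/-- In the ImplEx integration of the viscoelastic-viscoplastic-damage model,
the implicit linear relation
`σ = (1−d)·(3κ·P + 2μ·Q)(x − (1−B)·Δlam·Q(σ))`
has the unique solution
`σ = (1−d)·(3κ·P + (2μ / (1 + (1−d)(1−B)·2μ·Δlam))·Q)(x)`. -/
theorem implex_stress_explicit_unique
    (E : Type*) [AddCommGroup E] [Module ℝ E]
    (P Q : Module.End ℝ E)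
    (hP : P * P = P) (hQ : Q * Q = Q)
    (hPQ : P * Q = 0) (hQP : Q * P = 0)
    (hsum : P + Q = 1)
    (d B Δlam κ μ : ℝ)
    (hden : 1 + (1 - d) * (1 - B) * 2 * μ * Δlam ≠ 0)
    (x : E) :
    ((1 - d) • (((3 * κ) • P +
        (2 * μ / (1 + (1 - d) * (1 - B) * 2 * μ * Δlam)) • Q) x) =
      (1 - d) • (((3 * κ) • P + (2 * μ) • Q)
        (x - ((1 - B) * Δlam) • Q ((1 - d) • (((3 * κ) • P +
          (2 * μ / (1 + (1 - d) * (1 - B) * 2 * μ * Δlam)) • Q) x))))) ∧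
    (∀ s : E,
      s = (1 - d) • (((3 * κ) • P + (2 * μ) • Q) (x - ((1 - B) * Δlam) • Q s)) →
      s = (1 - d) • (((3 * κ) • P +
        (2 * μ / (1 + (1 - d) * (1 - B) * 2 * μ * Δlam)) • Q) x)) :=
  implex_stress_explicit_unique_general E P Q hQ hPQ hQP d B Δlam κ μ hden x
end

section
/- Let E be a real inner product space and define the von Mises equivalent norm vM(y) := √((3/2)·⟪y,y⟫). Let μ > 0, d < 1, B ≤ 1, Δr ≥ 0 and y ∈ E. Suppose s ∈ E with σ_eq := vM(s) > 0 satisfies the implicitly discretized relation s = 2μ(1−d)·( y − (1−B)·(3Δr / (2·σ_eq·(1−d)))·s ). Then: (i) s·(σ_eq + 3μ(1−B)Δr) = 2μ(1−d)·σ_eq·y, i.e. s = 2μ(1−d)·(σ_eq / (σ_eq + 3μ(1−B)Δr))·y whenever σ_eq + 3μ(1−B)Δr ≠ 0; and (ii) σ_eq = 2μ(1−d)·vM(y) − 3μ(1−B)·Δr. -/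
/-! Collecting the terms in `s` turns the implicit relation into `(σ_eq + 3μ(1−B)Δr)·s = 2μ(1−d)σ_eq·y`,
because the factor `σ_eq` cancels against the `1/σ_eq` of the flow rule. Applying the von Mises norm,
which is absolutely homogeneous, to this identity and cancelling `σ_eq = vM(s) > 0` gives
`σ_eq + 3μ(1−B)Δr = 2μ(1−d)·vM(y)`; the signs of the coefficients make the absolute values harmless. -/

open Real

section VonMises

variable {E : Type*} [NormedAddCommGroup E] [InnerProductSpace ℝ E]

noncomputable def vonMises (x : E) : ℝ := √((3 / 2) * inner ℝ x x)

theorem vonMises_eq_sqrt_mul_norm (x : E) : vonMises x = √(3 / 2) * ‖x‖ := by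
  rw [vonMises, real_inner_self_eq_norm_sq, sqrt_mul (by norm_num), sqrt_sq (norm_nonneg x)]

theorem vonMises_smul (a : ℝ) (x : E) : vonMises (a • x) = |a| * vonMises x := by
  simp only [vonMises_eq_sqrt_mul_norm, norm_smul, Real.norm_eq_abs]
  ring

theorem eq_mul_vonMises_of_smul_eq {a b : ℝ} {s y : E} (ha : 0 ≤ a) (hb : 0 ≤ b)
    (hs : 0 < vonMises s) (h : a • s = (b * vonMises s) • y) : a = b * vonMises y := by
  have hvM := congrArg vonMises h
  rw [vonMises_smul, vonMises_smul, abs_of_nonneg ha,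
    abs_of_nonneg (mul_nonneg hb hs.le), mul_right_comm] at hvM
  exact mul_right_cancel₀ hs.ne' hvM

end VonMises

theorem one_add_mul_smul_eq_of_eq_smul_sub {R M : Type*} [CommRing R] [AddCommGroup M] [Module R M]
    {k t : R} {s y : M} (h : s = k • (y - t • s)) : (1 + k * t) • s = k • y := by
  rw [add_smul, one_smul, mul_smul]
  nth_rewrite 1 [h]
  rw [smul_sub]
  abel

/-- Return-mapping for the deviatoric stress: if `s` with `σ_eq = vM(s) > 0`
satisfies the implicitly discretized relation
`s = 2μ(1−d)·(y − (1−B)·(3Δr/(2σ_eq(1−d)))·s)`, then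
(i) `(σ_eq + 3μ(1−B)Δr)·s = 2μ(1−d)σ_eq·y`, with the explicit form whenever
the denominator is nonzero, and (ii) `σ_eq = 2μ(1−d)·vM(y) − 3μ(1−B)Δr`. -/
theorem von_mises_return_mapping
    (E : Type*) [NormedAddCommGroup E] [InnerProductSpace ℝ E]
    (μ d B Δr : ℝ)
    (hμ : 0 < μ) (hd : d < 1) (hB : B ≤ 1) (hΔr : 0 ≤ Δr)
    (y s : E) (σeq : ℝ)
    (hσeq : σeq = Real.sqrt ((3 / 2) * (inner ℝ s s : ℝ)))
    (hpos : 0 < σeq)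
    (hs : s = (2 * μ * (1 - d)) •
      (y - ((1 - B) * (3 * Δr / (2 * σeq * (1 - d)))) • s)) :
    ((σeq + 3 * μ * (1 - B) * Δr) • s = (2 * μ * (1 - d) * σeq) • y) ∧
    (σeq + 3 * μ * (1 - B) * Δr ≠ 0 →
      s = (2 * μ * (1 - d) * (σeq / (σeq + 3 * μ * (1 - B) * Δr))) • y) ∧
    (σeq = 2 * μ * (1 - d) * Real.sqrt ((3 / 2) * (inner ℝ y y : ℝ)) -
      3 * μ * (1 - B) * Δr) := by
  have hσeq : σeq = vonMises s := hσeq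
  have hk : 0 < 2 * μ * (1 - d) := by nlinarith
  have hc : 0 ≤ 3 * μ * (1 - B) * Δr := by
    have : 0 ≤ 1 - B := by linarith
    positivity
  have hcoeff : σeq * (1 + 2 * μ * (1 - d) * ((1 - B) * (3 * Δr / (2 * σeq * (1 - d)))))
      = σeq + 3 * μ * (1 - B) * Δr := by
    field_simp [sub_ne_zero.mpr hd.ne']
  have key : (σeq + 3 * μ * (1 - B) * Δr) • s = (2 * μ * (1 - d) * σeq) • y := by
    rw [← hcoeff, mul_smul, one_add_mul_smul_eq_of_eq_smul_sub hs, smul_smul, mul_comm σeq]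
  refine ⟨key, fun hne => ?_, ?_⟩
  · rw [← mul_div_assoc, div_eq_inv_mul, mul_smul, eq_inv_smul_iff₀ hne, key]
  · have hnorm := eq_mul_vonMises_of_smul_eq (by linarith) hk.le (hσeq ▸ hpos) (hσeq ▸ key)
    rw [← hσeq] at hnorm
    change σeq = 2 * μ * (1 - d) * vonMises y - 3 * μ * (1 - B) * Δr
    linarith
end
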